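/- arXiv:1605.02077 — 3 statements merged into one kernel-verified Lean document; each statement's English description precedes it below -/
import Mathlib

section
/- Let ξ ∈ (0, 2/5], β ∈ (0,1), a > 0, and let N₀ ≥ 1 be an integer. Define N_k := ⌊ N₀ · (1+ξ)^k ⌋ for k ≥ 0 and assume N_{k+1} > N_k for all k ≥ 0. Setting ζ_k := a · N_k, one has ∑_{k=1}^{∞} exp( − log(1/β) · ( ζ_k + ζ_k⁻¹ ) ) ≤ 4 · ∑_{ℓ=0}^{∞} exp( − log(1/β) · ( (1+ξ)^ℓ + (1+ξ)^{−ℓ} ) ). -/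
lemma aux_mid_inc {u v : ℝ} (hu : 1 ≤ u) (huv : u ≤ v) : u + u⁻¹ ≤ v + v⁻¹ := by
  have hu0 : 0 < u := by linarith
  have hv0 : 0 < v := by linarith
  have h1 : u * u⁻¹ = 1 := mul_inv_cancel₀ hu0.ne'
  have h2 : v * v⁻¹ = 1 := mul_inv_cancel₀ hv0.ne'
  nlinarith [mul_pos hu0 hv0,
    mul_nonneg (sub_nonneg.2 huv)
      (sub_nonneg.2 (one_le_mul_of_one_le_of_one_le hu (hu.trans huv)))]

/-- grouping bound for the sequential-test error series
(Lemma `lem:seq-seq-indiff-adapt-sum`). -/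
theorem seq_indiff_adapt_sum
    (ξ β a : ℝ) (hξ : ξ ∈ Set.Ioc (0 : ℝ) (2 / 5)) (hβ : β ∈ Set.Ioo (0 : ℝ) 1)
    (ha : 0 < a) (N₀ : ℕ) (hN₀ : 1 ≤ N₀)
    (Nk : ℕ → ℕ) (hNk : ∀ k, Nk k = ⌊(N₀ : ℝ) * (1 + ξ) ^ k⌋₊)
    (hmono : ∀ k, Nk k < Nk (k + 1)) :
    ∑' k : ℕ,
        ENNReal.ofReal
          (Real.exp (-(Real.log (1 / β)) * (a * (Nk (k + 1) : ℝ) + (a * (Nk (k + 1) : ℝ))⁻¹))) ≤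
      4 * ∑' l : ℕ,
        ENNReal.ofReal (Real.exp (-(Real.log (1 / β)) * ((1 + ξ) ^ l + ((1 + ξ) ^ l)⁻¹))) := by
  obtain ⟨hξ0, hξ2⟩ := hξ
  obtain ⟨hβ0, hβ1⟩ := hβ
  set c : ℝ := 1 + ξ with hc_def
  have hc1 : 1 < c := by simp [hc_def]; linarith
  have hc0 : 0 < c := by linarith
  have hlogc : 0 < Real.log c := Real.log_pos hc1
  set L : ℝ := Real.log (1 / β) with hL_def
  have hL : 0 < L := Real.log_pos (one_lt_one_div hβ0 hβ1)
  have hNsm : StrictMono Nk := strictMono_nat_of_lt_succ hmono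
  have hN0eq : Nk 0 = N₀ := by simp [hNk 0]
  have hNge : ∀ j, 1 ≤ Nk j := by
    intro j
    calc 1 ≤ N₀ := hN₀
    _ = Nk 0 := hN0eq.symm
    _ ≤ Nk j := hNsm.monotone (Nat.zero_le j)
  have hNpos : ∀ j, (0 : ℝ) < (Nk j : ℝ) := fun j => by
    exact_mod_cast Nat.lt_of_lt_of_le Nat.zero_lt_one (hNge j)
  have hζpos : ∀ j, 0 < a * (Nk j : ℝ) := fun j => mul_pos ha (hNpos j)
  -- the key ratio bound: Nk (j+2) ≥ (1+ξ) Nk j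
  have hstep : ∀ j, c * (Nk j : ℝ) ≤ (Nk (j + 2) : ℝ) := by
    intro j
    have hplus2 : Nk j + 2 ≤ Nk (j + 2) := by
      have h1 := hmono j
      have h2 : Nk (j + 1) < Nk (j + 2) := hmono (j + 1)
      omega
    rcases le_or_gt ((Nk j : ℝ) * ξ) 2 with hcase | hcase
    · have : ((Nk j : ℝ)) + 2 ≤ (Nk (j + 2) : ℝ) := by exact_mod_cast hplus2
      simp only [hc_def]; nlinarith
    · have h1 : (Nk j : ℝ) ≤ (N₀ : ℝ) * c ^ j := by
        rw [hNk j]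
        exact Nat.floor_le (by positivity)
      have h2 : (N₀ : ℝ) * c ^ (j + 2) - 1 < (Nk (j + 2) : ℝ) := by
        rw [hNk (j + 2)]
        exact Nat.sub_one_lt_floor _
      have h3 : (N₀ : ℝ) * c ^ (j + 2) = ((N₀ : ℝ) * c ^ j) * c ^ 2 := by ring
      have h4 : (Nk j : ℝ) * c ^ 2 ≤ ((N₀ : ℝ) * c ^ j) * c ^ 2 := by nlinarith
      have hn1 : (1 : ℝ) ≤ (Nk j : ℝ) := by exact_mod_cast hNge j
      simp only [hc_def] at *
      nlinarith [mul_nonneg (mul_nonneg (hNpos j).le hξ0.le) hξ0.le]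
  -- logs
  set E : ℕ → ℝ := fun k => Real.log (a * (Nk (k + 1) : ℝ)) with hE_def
  have hEmono : Monotone E := by
    intro k1 k2 h
    exact Real.log_le_log (hζpos (k1 + 1)) (by
      have : (Nk (k1 + 1) : ℝ) ≤ (Nk (k2 + 1) : ℝ) := by
        exact_mod_cast hNsm.monotone (by omega)
      nlinarith)
  have hEstep : ∀ k, E k + Real.log c ≤ E (k + 2) := by
    intro k
    have h1 : c * (a * (Nk (k + 1) : ℝ)) ≤ a * (Nk (k + 3) : ℝ) := by
      have := hstep (k + 1)
      nlinarith
    have h2 : Real.log (c * (a * (Nk (k + 1) : ℝ))) ≤ Real.log (a * (Nk (k + 3) : ℝ)) :=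
      Real.log_le_log (mul_pos hc0 (hζpos (k + 1))) h1
    rw [Real.log_mul hc0.ne' (hζpos (k + 1)).ne'] at h2
    show Real.log (a * (Nk (k + 1) : ℝ)) + Real.log c ≤ Real.log (a * (Nk (k + 2 + 1) : ℝ))
    have h3 : k + 2 + 1 = k + 3 := rfl
    rw [h3]
    linarith
  set m : ℕ → ℕ := fun k => ⌊|E k| / Real.log c⌋₊ with hm_def
  set T : ℕ → ENNReal := fun l =>
    ENNReal.ofReal (Real.exp (-L * (c ^ l + (c ^ l)⁻¹))) with hT_def
  -- term bound
  have hterm : ∀ k,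
      ENNReal.ofReal
        (Real.exp (-L * (a * (Nk (k + 1) : ℝ) + (a * (Nk (k + 1) : ℝ))⁻¹))) ≤ T (m k) := by
    intro k
    set ζ : ℝ := a * (Nk (k + 1) : ℝ) with hζ_def
    have hζ0 : 0 < ζ := hζpos (k + 1)
    set u : ℝ := c ^ (m k) with hu_def
    have hu1 : (1 : ℝ) ≤ u := one_le_pow₀ hc1.le
    have hu0 : 0 < u := by linarith
    set t : ℝ := max ζ ζ⁻¹ with ht_def
    have ht0 : 0 < t := lt_max_of_lt_left hζ0
    have hlogt : Real.log t = |E k| := by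
      rcases le_or_gt 1 ζ with h | h
      · have : t = ζ := max_eq_left (by
          calc ζ⁻¹ ≤ 1 := inv_le_one_of_one_le₀ h
          _ ≤ ζ := h)
        rw [this, hE_def]
        rw [abs_of_nonneg (Real.log_nonneg h)]
      · have hinv : 1 ≤ ζ⁻¹ := (one_le_inv₀ hζ0).2 h.le
        have : t = ζ⁻¹ := max_eq_right (by linarith)
        rw [this, Real.log_inv, hE_def, abs_of_neg (Real.log_neg hζ0 h)]
    have hut : u ≤ t := by
      have hlogu : Real.log u = (m k) * Real.log c := Real.log_pow _ _
      have hmle : (m k : ℝ) ≤ |E k| / Real.log c :=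
        Nat.floor_le (by positivity)
      have : (m k : ℝ) * Real.log c ≤ |E k| := (le_div_iff₀ hlogc).mp hmle
      have hlog : Real.log u ≤ Real.log t := by rw [hlogu, hlogt]; exact this
      calc u = Real.exp (Real.log u) := (Real.exp_log hu0).symm
      _ ≤ Real.exp (Real.log t) := Real.exp_le_exp.2 hlog
      _ = t := Real.exp_log ht0
    have hsum_eq : t + t⁻¹ = ζ + ζ⁻¹ := by
      rcases le_or_gt 1 ζ with h | h
      · have h1 : t = ζ := max_eq_left (by
          calc ζ⁻¹ ≤ 1 := inv_le_one_of_one_le₀ h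
          _ ≤ ζ := h)
        rw [h1]
      · have hinv : 1 ≤ ζ⁻¹ := (one_le_inv₀ hζ0).2 h.le
        have h1 : t = ζ⁻¹ := max_eq_right (by linarith)
        rw [h1, inv_inv, add_comm]
    have key : u + u⁻¹ ≤ ζ + ζ⁻¹ := by
      rw [← hsum_eq]; exact aux_mid_inc hu1 hut
    have : -L * (ζ + ζ⁻¹) ≤ -L * (u + u⁻¹) := by nlinarith
    exact ENNReal.ofReal_le_ofReal (Real.exp_le_exp.2 this)
  -- injection
  set ψ : ℕ → ℕ × Fin 4 := fun k =>
    (m k, ⟨k % 2 + (if E k < 0 then 2 else 0), by split <;> omega⟩) with hψ_def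
  have hψinj : Function.Injective ψ := by
    have key : ∀ k1 k2, k1 < k2 → ψ k1 = ψ k2 → False := by
      intro k1 k2 hlt heq
      have hmEq : m k1 = m k2 := congrArg Prod.fst heq
      have hfEq : k1 % 2 + (if E k1 < 0 then 2 else 0)
          = k2 % 2 + (if E k2 < 0 then 2 else 0) :=
        congrArg (fun p : ℕ × Fin 4 => (p.2 : Fin 4).val) heq
      have hmod1 : k1 % 2 < 2 := Nat.mod_lt _ (by norm_num)
      have hmod2 : k2 % 2 < 2 := Nat.mod_lt _ (by norm_num)
      have hEle : ∀ j1 j2 : ℕ, j1 + 2 ≤ j2 → E j1 + Real.log c ≤ E j2 := by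
        intro j1 j2 hj
        exact (hEstep j1).trans (hEmono hj)
      rcases lt_or_ge (E k1) 0 with h1 | h1 <;> rcases lt_or_ge (E k2) 0 with h2 | h2
      · -- both negative
        rw [if_pos h1, if_pos h2] at hfEq
        have hpar : k1 % 2 = k2 % 2 := by omega
        have hk2 : k1 + 2 ≤ k2 := by omega
        have hE12 : E k1 + Real.log c ≤ E k2 := hEle k1 k2 hk2
        have habs1 : |E k1| = -E k1 := abs_of_neg h1
        have habs2 : |E k2| = -E k2 := abs_of_neg h2
        have hdiv : (-E k2) / Real.log c + 1 ≤ (-E k1) / Real.log c := by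
          have h := (one_le_div hlogc).mpr (by linarith : Real.log c ≤ (-E k1) - (-E k2))
          rw [sub_div] at h
          linarith
        have : m k2 + 1 ≤ m k1 := by
          have hnn : 0 ≤ (-E k2) / Real.log c := div_nonneg (by linarith) hlogc.le
          calc m k2 + 1 = ⌊(-E k2) / Real.log c + 1⌋₊ := by
                rw [Nat.floor_add_one hnn, hm_def]; simp [habs2]
          _ ≤ ⌊(-E k1) / Real.log c⌋₊ := Nat.floor_mono hdiv
          _ = m k1 := by rw [hm_def]; simp [habs1]
        omega
      · rw [if_pos h1, if_neg (not_lt.2 h2)] at hfEq; omega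
      · rw [if_neg (not_lt.2 h1), if_pos h2] at hfEq; omega
      · -- both nonnegative
        rw [if_neg (not_lt.2 h1), if_neg (not_lt.2 h2)] at hfEq
        have hpar : k1 % 2 = k2 % 2 := by omega
        have hk2 : k1 + 2 ≤ k2 := by omega
        have hE12 : E k1 + Real.log c ≤ E k2 := hEle k1 k2 hk2
        have habs1 : |E k1| = E k1 := abs_of_nonneg h1
        have habs2 : |E k2| = E k2 := abs_of_nonneg h2
        have hdiv : E k1 / Real.log c + 1 ≤ E k2 / Real.log c := by
          have h := (one_le_div hlogc).mpr (by linarith : Real.log c ≤ E k2 - E k1)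
          rw [sub_div] at h
          linarith
        have : m k1 + 1 ≤ m k2 := by
          have hnn : 0 ≤ E k1 / Real.log c := div_nonneg h1 hlogc.le
          calc m k1 + 1 = ⌊E k1 / Real.log c + 1⌋₊ := by
                rw [Nat.floor_add_one hnn, hm_def]; simp [habs1]
          _ ≤ ⌊E k2 / Real.log c⌋₊ := Nat.floor_mono hdiv
          _ = m k2 := by rw [hm_def]; simp [habs2]
        omega
    intro k1 k2 h
    rcases lt_trichotomy k1 k2 with hlt | heq | hgt
    · exact absurd h (fun hh => key k1 k2 hlt hh)
    · exact heq
    · exact absurd h (fun hh => key k2 k1 hgt hh.symm)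
  calc
    ∑' k : ℕ, ENNReal.ofReal
        (Real.exp (-L * (a * (Nk (k + 1) : ℝ) + (a * (Nk (k + 1) : ℝ))⁻¹)))
      ≤ ∑' k : ℕ, T (m k) := ENNReal.tsum_le_tsum hterm
    _ = ∑' k : ℕ, (fun p : ℕ × Fin 4 => T p.1) (ψ k) := rfl
    _ ≤ ∑' p : ℕ × Fin 4, T p.1 :=
        ENNReal.tsum_comp_le_tsum_of_injective hψinj _
    _ = ∑' l : ℕ, ∑' _ : Fin 4, T l := ENNReal.tsum_prod' (f := fun p : ℕ × Fin 4 => T p.1)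
    _ = ∑' l : ℕ, 4 * T l := by
        congr 1; funext l
        rw [tsum_fintype]
        simp [Finset.sum_const, mul_comm]
    _ = 4 * ∑' l : ℕ, T l := ENNReal.tsum_mul_left
end

section
/- For every ξ ∈ (0, 2/5], every integer c ≥ 0, and every real number ℓ with 9c/(5ξ) ≤ ℓ < 9(c+1)/(5ξ), one has (1+ξ)^ℓ + (1+ξ)^{−ℓ} ≥ 2·(c+1). -/
open Real

/-- `4^(2/9) ≤ 7/5`. -/
lemma aux_rpow_49 : (4:ℝ) ^ ((2:ℝ)/9) ≤ 7/5 := by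
  have h : ((4:ℝ) ^ ((2:ℝ)/9)) ^ (9:ℕ) = 16 := by
    rw [← Real.rpow_natCast ((4:ℝ)^((2:ℝ)/9)) 9,
        ← Real.rpow_mul (by norm_num : (0:ℝ) ≤ 4)]
    rw [show ((2:ℝ)/9 * (9:ℕ)) = ((2:ℕ):ℝ) by push_cast; ring, Real.rpow_natCast]
    norm_num
  have h2 : ((4:ℝ) ^ ((2:ℝ)/9)) ^ (9:ℕ) ≤ ((7:ℝ)/5) ^ (9:ℕ) := by
    rw [h]; norm_num
  exact le_of_pow_le_pow_left₀ (by norm_num) (by norm_num) h2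

/-- convexity bound: `4^(5ξ/9) ≤ 1 + ξ` on `(0, 2/5]`. -/
lemma aux_conv (ξ : ℝ) (h0 : 0 < ξ) (h1 : ξ ≤ 2/5) : (4:ℝ) ^ (5*ξ/9) ≤ 1 + ξ := by
  set t : ℝ := 5*ξ/2 with ht
  have ht0 : 0 ≤ t := by positivity
  have ht1 : t ≤ 1 := by rw [ht]; linarith
  have key := convexOn_exp.2 (Set.mem_univ (0:ℝ))
      (Set.mem_univ ((2:ℝ)/9 * Real.log 4))
      (by linarith : (0:ℝ) ≤ 1 - t) ht0 (by ring)
  simp only [smul_eq_mul, mul_zero, zero_add, Real.exp_zero, mul_one] at key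
  have e4 : Real.exp ((2:ℝ)/9 * Real.log 4) = (4:ℝ) ^ ((2:ℝ)/9) := by
    rw [Real.rpow_def_of_pos (by norm_num), mul_comm]
  rw [e4] at key
  have elhs : (4:ℝ) ^ (5*ξ/9) = Real.exp (t * ((2:ℝ)/9 * Real.log 4)) := by
    rw [Real.rpow_def_of_pos (by norm_num)]
    congr 1
    rw [ht]; ring
  rw [elhs]
  have h49 := aux_rpow_49
  have : t * ((4:ℝ) ^ ((2:ℝ)/9)) ≤ t * (7/5) := by
    exact mul_le_mul_of_nonneg_left h49 ht0
  calc Real.exp (t * ((2:ℝ)/9 * Real.log 4))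
      ≤ (1 - t) + t * ((4:ℝ) ^ ((2:ℝ)/9)) := key
    _ ≤ (1 - t) + t * (7/5) := by linarith
    _ = 1 + ξ := by rw [ht]; ring

/-- `4^c ≤ (1+ξ)^(9c/(5ξ))`. -/
lemma aux_pow (ξ : ℝ) (h0 : 0 < ξ) (h1 : ξ ≤ 2/5) (c : ℕ) :
    (4:ℝ) ^ c ≤ (1 + ξ) ^ (9 * (c:ℝ) / (5*ξ)) := by
  have hb : (0:ℝ) < 1 + ξ := by linarith
  have h4 : (4:ℝ) ≤ (1 + ξ) ^ ((9:ℝ)/(5*ξ)) := by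
    have e : ((4:ℝ) ^ (5*ξ/9)) ^ ((9:ℝ)/(5*ξ)) = 4 := by
      rw [← Real.rpow_mul (by norm_num : (0:ℝ) ≤ 4)]
      rw [show (5*ξ/9 * ((9:ℝ)/(5*ξ))) = 1 by field_simp]
      exact Real.rpow_one 4
    calc (4:ℝ) = ((4:ℝ) ^ (5*ξ/9)) ^ ((9:ℝ)/(5*ξ)) := e.symm
      _ ≤ (1 + ξ) ^ ((9:ℝ)/(5*ξ)) :=
        Real.rpow_le_rpow (by positivity) (aux_conv ξ h0 h1) (by positivity)
  have e2 : (1 + ξ) ^ (9 * (c:ℝ) / (5*ξ)) = ((1 + ξ) ^ ((9:ℝ)/(5*ξ))) ^ c := by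
    rw [← Real.rpow_natCast ((1 + ξ) ^ ((9:ℝ)/(5*ξ))) c,
        ← Real.rpow_mul (le_of_lt hb)]
    congr 1
    ring
  rw [e2]
  exact pow_le_pow_left₀ (by norm_num) h4 c

/-- pointwise bound for grouped terms
(Lemma `lem:seq-seq-indiff-adapt-group`). -/
theorem seq_indiff_adapt_group
    (ξ : ℝ) (hξ : ξ ∈ Set.Ioc (0 : ℝ) (2 / 5)) (c : ℕ) (l : ℝ)
    (hl1 : 9 * (c : ℝ) / (5 * ξ) ≤ l) (hl2 : l < 9 * ((c : ℝ) + 1) / (5 * ξ)) :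
    2 * ((c : ℝ) + 1) ≤ (1 + ξ) ^ l + (1 + ξ) ^ (-l) := by
  obtain ⟨h0, h1⟩ := hξ
  have hb : (1:ℝ) < 1 + ξ := by linarith
  set x : ℝ := (1 + ξ) ^ l with hx
  have hxpos : 0 < x := Real.rpow_pos_of_pos (by linarith) l
  have hneg : (1 + ξ) ^ (-l) = x⁻¹ := by
    rw [hx, Real.rpow_neg (by linarith : (0:ℝ) ≤ 1 + ξ)]
  have hinvpos : 0 < x⁻¹ := by positivity
  have hmono : (1 + ξ) ^ (9 * (c:ℝ) / (5*ξ)) ≤ x :=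
    Real.rpow_le_rpow_of_exponent_le (le_of_lt hb) hl1
  have h4c : (4:ℝ) ^ c ≤ x := le_trans (aux_pow ξ h0 h1 c) hmono
  rw [hneg]
  rcases Nat.eq_zero_or_pos c with hc | hc
  · subst hc
    have hx1 : x * x⁻¹ = 1 := mul_inv_cancel₀ (ne_of_gt hxpos)
    push_cast
    nlinarith [sq_nonneg (x - 1), hxpos, hx1]
  · have hcn : (1:ℝ) ≤ (c:ℝ) := by exact_mod_cast hc
    have hbern : (1:ℝ) + (c:ℝ) * 3 ≤ 4 ^ c := by
      have := one_add_mul_le_pow (by norm_num : (-2:ℝ) ≤ 3) c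
      norm_num at this ⊢
      convert this using 2 <;> ring_nf
    have : 2 * ((c:ℝ) + 1) ≤ (4:ℝ) ^ c := by nlinarith
    linarith
end

section
/- Fix d ≥ 2 and let P be the transition matrix of the lazy random walk on the cycle C_{2d} = ZMod (2d): P u v = 1/2 if v = u, P u v = 1/4 if v = u + 1 or v = u − 1 (mod 2d), and P u v = 0 otherwise. P is irreducible, aperiodic, and reversible with respect to the uniform stationary distribution π ≡ 1/(2d). For 1 ≤ j ≤ d define f_j : ZMod (2d) → ℝ by f_j(u) := (1 + cos(π·j·u/d))/2, which takes values in [0,1]. Then for every orthonormal eigenbasis γ₁,…,γ_{2d} of P as in the context, the f_j-spectral quantities satisfy λ_{f_j} = (1 + cos(π·j/d))/2, and hence γ_{f_j} := 1 − λ_{f_j} = (1 − cos(π·j/d))/2; moreover γ_{f_j} ≥ π²·j²/(24·d²) whenever 1 ≤ j ≤ d/2, and γ_{f_j} ≥ 1/2 whenever d/2 < j ≤ d. -/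
open Finset

set_option maxHeartbeats 1000000

lemma aux_cos_per (d j n : ℕ) (hd : 0 < d) :
    Real.cos (Real.pi * j * ((n % (2*d) : ℕ) : ℝ) / d) = Real.cos (Real.pi * j * (n : ℝ) / d) := by
  have hdm := Nat.div_add_mod n (2*d)
  set q := n / (2*d)
  set r := n % (2*d)
  have hn : (n : ℝ) = 2*d*q + r := by exact_mod_cast hdm.symm
  have hd0 : (d : ℝ) ≠ 0 := Nat.cast_ne_zero.mpr hd.ne'
  have heq : Real.pi * j * (n : ℝ) / d = Real.pi * j * (r : ℝ) / d + ((j*q : ℕ) : ℝ) * (2*Real.pi) := by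
    rw [hn]; push_cast; field_simp; ring
  rw [heq, Real.cos_add_nat_mul_two_pi]

/-- the lazy random walk on the cycle `C_{2d}` and the spectral gaps of the
periodic functions `f_j` (Section `subsec:example-cycle`). -/
theorem lazy_cycle_periodic_fn_gaps
    (d : ℕ) (hd : 2 ≤ d) [NeZero (2 * d)]
    (P : Matrix (ZMod (2 * d)) (ZMod (2 * d)) ℝ)
    (hP : ∀ u v : ZMod (2 * d),
      P u v = if v = u then (1 : ℝ) / 2 else if v = u + 1 ∨ v = u - 1 then 1 / 4 else 0)
    (π : ZMod (2 * d) → ℝ) (hπ : ∀ u, π u = 1 / (2 * (d : ℝ))) :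
    -- the chain is a transition matrix, irreducible, aperiodic, and reversible with
    -- stationary distribution `π`
    ((∀ u v, 0 ≤ P u v) ∧ (∀ u, ∑ v, P u v = 1) ∧
      (∀ u v : ZMod (2 * d), ∃ n : ℕ, 0 < (P ^ n) u v) ∧
      (∀ u : ZMod (2 * d), ∃ N : ℕ, ∀ n, N ≤ n → 0 < (P ^ n) u u) ∧
      (∀ u v, π u * P u v = π v * P v u) ∧
      (∀ v, ∑ u, π u * P u v = π v)) ∧
    -- the functions `f_j` take values in `[0,1]`, and their spectral quantities are as claimed
    (∀ j : ℕ, 1 ≤ j → j ≤ d →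
      (∀ u : ZMod (2 * d),
        (1 + Real.cos (Real.pi * (j : ℝ) * ((u.val : ℕ) : ℝ) / (d : ℝ))) / 2 ∈
          Set.Icc (0 : ℝ) 1) ∧
      (∀ (lam : Fin (2 * d) → ℝ) (γ : Fin (2 * d) → ZMod (2 * d) → ℝ),
        (∀ a b, ∑ i, γ a i * γ b i = if a = b then (1 : ℝ) else 0) →
        (∀ a, P.mulVec (γ a) = lam a • γ a) →
        (lam ⟨0, Nat.pos_of_ne_zero (NeZero.ne _)⟩ = 1) →
        (∀ a b : Fin (2 * d), a ≤ b → lam b ≤ lam a) →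
        (∀ a : Fin (2 * d), a ≠ ⟨0, Nat.pos_of_ne_zero (NeZero.ne _)⟩ → lam a < 1) →
        (∀ a, (-1 : ℝ) < lam a) →
        (∀ i, γ ⟨0, Nat.pos_of_ne_zero (NeZero.ne _)⟩ i = Real.sqrt (π i)) →
        ∀ (Jf : Finset (Fin (2 * d))) (lamf : ℝ),
          (∀ a, a ∈ Jf ↔ (a ≠ ⟨0, Nat.pos_of_ne_zero (NeZero.ne _)⟩ ∧
            (∑ i, Real.sqrt (π i) * γ a i *
              ((1 + Real.cos (Real.pi * (j : ℝ) * ((i.val : ℕ) : ℝ) / (d : ℝ))) / 2)) ≠ 0)) →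
          (lamf = if hne : Jf.Nonempty then Jf.sup' hne (fun a => |lam a|) else 0) →
          lamf = (1 + Real.cos (Real.pi * (j : ℝ) / (d : ℝ))) / 2 ∧
          1 - lamf = (1 - Real.cos (Real.pi * (j : ℝ) / (d : ℝ))) / 2 ∧
          ((j : ℝ) ≤ (d : ℝ) / 2 →
            Real.pi ^ 2 * (j : ℝ) ^ 2 / (24 * (d : ℝ) ^ 2) ≤ 1 - lamf) ∧
          ((d : ℝ) / 2 < (j : ℝ) → (1 : ℝ) / 2 ≤ 1 - lamf))) := by
  haveI : Fact (1 < 2 * d) := ⟨by omega⟩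
  have h1 : (1 : ZMod (2 * d)) ≠ 0 := by
    intro h
    have := congrArg ZMod.val h
    rw [ZMod.val_one, ZMod.val_zero] at this
    omega
  have h2 : (2 : ZMod (2 * d)) ≠ 0 := by
    intro h
    have h' : ((2 : ℕ) : ZMod (2 * d)) = 0 := by push_cast; exact h
    rw [ZMod.natCast_eq_zero_iff] at h'
    have := Nat.le_of_dvd (by norm_num) h'
    omega
  have key1 : ∀ u : ZMod (2*d), u + 1 ≠ u := fun u h => h1 (by linear_combination h)
  have key2 : ∀ u : ZMod (2*d), u - 1 ≠ u := fun u h => h1 (by linear_combination -h)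
  have key3 : ∀ u : ZMod (2*d), u + 1 ≠ u - 1 := fun u h => h2 (by linear_combination h)
  -- decomposition of P
  have Pdec : ∀ u v, P u v = (if v = u then (1:ℝ)/2 else 0) +
      ((if v = u + 1 then (1:ℝ)/4 else 0) + (if v = u - 1 then (1:ℝ)/4 else 0)) := by
    intro u v
    rw [hP]
    rcases eq_or_ne v u with rfl | hvu
    · rw [if_pos rfl, if_pos rfl, if_neg (Ne.symm (key1 v)), if_neg (Ne.symm (key2 v))]
      norm_num
    · rw [if_neg hvu, if_neg hvu]
      rcases eq_or_ne v (u + 1) with rfl | hv1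
      · rw [if_pos (Or.inl rfl), if_pos rfl, if_neg (key3 u)]
        norm_num
      · rw [if_neg hv1]
        rcases eq_or_ne v (u - 1) with rfl | hv2
        · rw [if_pos (Or.inr rfl), if_pos rfl]; norm_num
        · rw [if_neg (by tauto), if_neg hv2]; norm_num
  have Psymm : ∀ u v, P u v = P v u := by
    intro u v
    rw [Pdec, Pdec]
    have e1 : (v = u) ↔ (u = v) := eq_comm
    have e2 : (v = u + 1) ↔ (u = v - 1) := by
      constructor <;> intro h <;> linear_combination -h
    have e3 : (v = u - 1) ↔ (u = v + 1) := by
      constructor <;> intro h <;> linear_combination -h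
    simp only [e1, e2, e3]
    ring
  have Pnonneg : ∀ u v, 0 ≤ P u v := by
    intro u v; rw [hP]; split_ifs <;> norm_num
  have Prow : ∀ u, ∑ v, P u v = 1 := by
    intro u
    simp only [Pdec, Finset.sum_add_distrib, Finset.sum_ite_eq', Finset.mem_univ, if_pos]
    norm_num
  have Prev : ∀ u v, π u * P u v = π v * P v u := by
    intro u v; rw [hπ, hπ, Psymm]
  have Pstat : ∀ v, ∑ u, π u * P u v = π v := by
    intro v
    simp only [hπ]
    rw [← Finset.mul_sum]
    have h' : ∑ u, P u v = 1 := by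
      rw [Finset.sum_congr rfl fun u _ => Psymm u v, Prow]
    rw [h', mul_one]
  -- powers
  have hpownn : ∀ n : ℕ, ∀ u v, 0 ≤ (P ^ n) u v := by
    intro n
    induction n with
    | zero => intro u v; simp [Matrix.one_apply]; split_ifs <;> norm_num
    | succ n ih =>
      intro u v
      rw [pow_succ, Matrix.mul_apply]
      exact Finset.sum_nonneg fun k _ => mul_nonneg (ih u k) (Pnonneg k v)
  have hstep : ∀ (n : ℕ) (u v w : ZMod (2*d)), (P ^ n) u w * P w v ≤ (P ^ (n+1)) u v := by
    intro n u v w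
    rw [pow_succ, Matrix.mul_apply]
    exact Finset.single_le_sum (fun k _ => mul_nonneg (hpownn n u k) (Pnonneg k v))
      (Finset.mem_univ w)
  have hPdiag : ∀ w : ZMod (2*d), P w w = 1/2 := by intro w; rw [hP]; simp
  have hPnext : ∀ w : ZMod (2*d), P w (w + 1) = 1/4 := by
    intro w; rw [hP, if_neg (key1 w), if_pos (Or.inl rfl)]
  have hmono : ∀ (n : ℕ) (u v : ZMod (2*d)), 0 < (P ^ n) u v → 0 < (P ^ (n+1)) u v := by
    intro n u v h
    calc (0:ℝ) < (P ^ n) u v * P v v := by rw [hPdiag]; positivity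
    _ ≤ _ := hstep n u v v
  have hplus : ∀ (n : ℕ) (u : ZMod (2*d)), 0 < (P ^ n) u (u + (n : ZMod (2*d))) := by
    intro n
    induction n with
    | zero => intro u; simp [Matrix.one_apply]
    | succ n ih =>
      intro u
      have h0 : (0:ℝ) < (P ^ n) u (u + n) * P (u + n) (u + n + 1) := by
        rw [hPnext]
        exact mul_pos (ih u) (by norm_num)
      have h1' := hstep n u (u + n + 1) (u + n)
      have : ((n + 1 : ℕ) : ZMod (2*d)) = (n : ZMod (2*d)) + 1 := by push_cast; ring
      rw [this, ← add_assoc]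
      linarith
  have hirr : ∀ u v : ZMod (2*d), ∃ n : ℕ, 0 < (P ^ n) u v := by
    intro u v
    refine ⟨(v - u).val, ?_⟩
    have hv : u + ((v - u).val : ZMod (2*d)) = v := by
      rw [ZMod.natCast_rightInverse (v - u)]; ring
    have := hplus (v - u).val u
    rwa [hv] at this
  have haper : ∀ u : ZMod (2*d), ∃ N : ℕ, ∀ n, N ≤ n → 0 < (P ^ n) u u := by
    intro u
    refine ⟨0, fun n _ => ?_⟩
    induction n with
    | zero => simp [Matrix.one_apply]
    | succ n ih => exact hmono n u u (ih (Nat.zero_le n))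
  refine ⟨⟨Pnonneg, Prow, hirr, haper, Prev, Pstat⟩, ?_⟩
  have hdR : (0 : ℝ) < d := by exact_mod_cast (by omega : 0 < d)
  intro j hj1 hjd
  have hjR : (1:ℝ) ≤ (j:ℝ) := by exact_mod_cast hj1
  have hjdR : (j:ℝ) ≤ (d:ℝ) := by exact_mod_cast hjd
  set θ : ℝ := Real.pi * (j:ℝ) / (d:ℝ) with hθdef
  have hπ0 := Real.pi_pos
  have hθpos : 0 < θ := by rw [hθdef]; positivity
  have hθle : θ ≤ Real.pi := by
    rw [hθdef, div_le_iff₀ hdR]; nlinarith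
  constructor
  · intro u
    constructor
    · have := Real.neg_one_le_cos (Real.pi * (j:ℝ) * ((u.val : ℕ) : ℝ) / (d:ℝ)); linarith
    · have := Real.cos_le_one (Real.pi * (j:ℝ) * ((u.val : ℕ) : ℝ) / (d:ℝ)); linarith
  · intro lam γ horth heig hlam0 hmono hlt1 hgt hγ0 Jf lamf hJf hlamf
    set z0 : Fin (2*d) := ⟨0, Nat.pos_of_ne_zero (NeZero.ne _)⟩ with hz0
    set s : ℝ := Real.sqrt (1 / (2 * (d:ℝ))) with hs
    have hspos : 0 < s := Real.sqrt_pos.mpr (by positivity)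
    have hsqrtπ : ∀ i : ZMod (2*d), Real.sqrt (π i) = s := fun i => by rw [hπ]
    have hγ0' : ∀ i, γ z0 i = s := fun i => by rw [hγ0, hsqrtπ]
    have hcv : ∀ (v : ZMod (2*d)) (n : ℕ), ((n:ℕ) : ZMod (2*d)) = v →
        Real.cos (Real.pi * (j:ℝ) * ((v.val : ℕ):ℝ) / (d:ℝ))
          = Real.cos (Real.pi * (j:ℝ) * (n:ℝ) / (d:ℝ)) := by
      intro v n hn
      rw [← hn, ZMod.val_natCast]
      exact aux_cos_per d j n (by omega)
    set μ : ℝ := (1 + Real.cos θ)/2 with hμ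
    set g : ZMod (2*d) → ℝ :=
      fun i => Real.cos (Real.pi * (j:ℝ) * ((i.val : ℕ):ℝ)/(d:ℝ)) / 2 with hg
    have hPg : ∀ u : ZMod (2*d), ∑ v, P u v * g v = μ * g u := by
      intro u
      have hsum : ∑ v, P u v * g v = (1/2) * g u + ((1/4) * g (u+1) + (1/4) * g (u-1)) := by
        simp only [Pdec, add_mul, Finset.sum_add_distrib, ite_mul, zero_mul,
          Finset.sum_ite_eq', Finset.mem_univ, if_true]
      set n : ℕ := (u - 1).val with hn
      have e0 : ((n : ℕ) : ZMod (2*d)) = u - 1 := ZMod.natCast_rightInverse _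
      have e1 : ((n + 1 : ℕ) : ZMod (2*d)) = u := by push_cast [e0]; ring
      have e2 : ((n + 2 : ℕ) : ZMod (2*d)) = u + 1 := by push_cast [e0]; ring
      have cu : Real.cos (Real.pi * (j:ℝ) * ((u.val : ℕ):ℝ)/(d:ℝ))
          = Real.cos (Real.pi * (j:ℝ) * ((n:ℝ)+1)/(d:ℝ)) := by
        rw [hcv u (n+1) e1]; push_cast; ring_nf
      have cup : Real.cos (Real.pi * (j:ℝ) * (((u+1).val : ℕ):ℝ)/(d:ℝ))
          = Real.cos (Real.pi * (j:ℝ) * ((n:ℝ)+2)/(d:ℝ)) := by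
        rw [hcv (u+1) (n+2) e2]; push_cast; ring_nf
      have cum : Real.cos (Real.pi * (j:ℝ) * (((u-1).val : ℕ):ℝ)/(d:ℝ))
          = Real.cos (Real.pi * (j:ℝ) * ((n:ℝ))/(d:ℝ)) := by
        rw [hcv (u-1) n e0]
      have key : Real.cos (Real.pi*(j:ℝ)*(n:ℝ)/(d:ℝ)) + Real.cos (Real.pi*(j:ℝ)*((n:ℝ)+2)/(d:ℝ))
          = 2 * Real.cos θ * Real.cos (Real.pi*(j:ℝ)*((n:ℝ)+1)/(d:ℝ)) := by
        have h1 : Real.pi*(j:ℝ)*((n:ℝ)+2)/(d:ℝ) = Real.pi*(j:ℝ)*((n:ℝ)+1)/(d:ℝ) + θ := by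
          rw [hθdef]; ring
        have h2 : Real.pi*(j:ℝ)*(n:ℝ)/(d:ℝ) = Real.pi*(j:ℝ)*((n:ℝ)+1)/(d:ℝ) - θ := by
          rw [hθdef]; ring
        rw [h1, h2, Real.cos_add, Real.cos_sub]; ring
      rw [hsum]
      simp only [hg]
      rw [cu, cup, cum, hμ]
      linear_combination key / 8
    have hγsum : ∀ a : Fin (2*d), a ≠ z0 → ∑ i, γ a i = 0 := by
      intro a ha
      have h := horth a z0
      rw [if_neg ha] at h
      have h2 : ∑ i, γ a i * γ z0 i = (∑ i, γ a i) * s := by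
        rw [Finset.sum_mul]; exact Finset.sum_congr rfl fun i _ => by rw [hγ0' i]
      rw [h2] at h
      exact (mul_eq_zero.mp h).resolve_right hspos.ne'
    have hproj : ∀ a : Fin (2*d), a ≠ z0 →
        (∑ i, Real.sqrt (π i) * γ a i *
          ((1 + Real.cos (Real.pi * (j:ℝ) * ((i.val : ℕ):ℝ) / (d:ℝ)))/2))
          = s * ∑ i, γ a i * g i := by
      intro a ha
      have hterm : ∀ i : ZMod (2*d), Real.sqrt (π i) * γ a i *
          ((1 + Real.cos (Real.pi * (j:ℝ) * ((i.val : ℕ):ℝ) / (d:ℝ)))/2)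
          = s * (γ a i * (1/2)) + s * (γ a i * g i) := by
        intro i; rw [hsqrtπ]; simp only [hg]; ring
      rw [Finset.sum_congr rfl fun i _ => hterm i, Finset.sum_add_distrib,
        ← Finset.mul_sum, ← Finset.mul_sum]
      have h0 : ∑ i, γ a i * (1/2 : ℝ) = 0 := by
        rw [← Finset.sum_mul, hγsum a ha, zero_mul]
      rw [h0, mul_zero, zero_add]
    have heigval : ∀ a ∈ Jf, lam a = μ := by
      intro a ha
      obtain ⟨haz, hS⟩ := (hJf a).mp ha
      rw [hproj a haz] at hS
      have hc : (∑ i, γ a i * g i) ≠ 0 := fun h => hS (by rw [h, mul_zero])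
      have hA : ∑ i, (P.mulVec (γ a)) i * g i = lam a * ∑ i, γ a i * g i := by
        rw [heig a]
        simp only [Pi.smul_apply, smul_eq_mul]
        rw [Finset.mul_sum]
        exact Finset.sum_congr rfl fun i _ => by ring
      have hB : ∑ i, (P.mulVec (γ a)) i * g i = μ * ∑ i, γ a i * g i := by
        simp only [Matrix.mulVec, dotProduct]
        calc ∑ i, (∑ k, P i k * γ a k) * g i
            = ∑ k, γ a k * (∑ i, P k i * g i) := by
              simp only [Finset.sum_mul]
              rw [Finset.sum_comm]
              exact Finset.sum_congr rfl fun k _ => by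
                rw [Finset.mul_sum]
                exact Finset.sum_congr rfl fun i _ => by rw [Psymm i k]; ring
          _ = ∑ k, γ a k * (μ * g k) := Finset.sum_congr rfl fun k _ => by rw [hPg k]
          _ = μ * ∑ k, γ a k * g k := by
              rw [Finset.mul_sum]
              exact Finset.sum_congr rfl fun k _ => by ring
      exact mul_right_cancel₀ hc (hA.symm.trans hB)
    have hne : Jf.Nonempty := by
      by_contra hJe
      have hnotmem : ∀ a, a ∉ Jf := fun a ha => hJe ⟨a, ha⟩
      have hzero : ∀ a, a ≠ z0 → ∑ i, γ a i * g i = 0 := by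
        intro a ha
        have hx := hnotmem a
        rw [hJf a] at hx
        push_neg at hx
        have hS := hx ha
        rw [hproj a ha] at hS
        exact (mul_eq_zero.mp hS).resolve_left hspos.ne'
      have e : ZMod (2*d) ≃ Fin (2*d) := Fintype.equivFinOfCardEq (ZMod.card _)
      set M : Matrix (Fin (2*d)) (Fin (2*d)) ℝ := Matrix.of (fun a b => γ a (e.symm b)) with hM
      have hMMT : M * M.transpose = 1 := by
        ext a b
        simp only [Matrix.mul_apply, Matrix.transpose_apply, Matrix.of_apply, Matrix.one_apply, hM]
        rw [← horth a b]
        exact Equiv.sum_comp e.symm fun i => γ a i * γ b i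
      have hMTM := mul_eq_one_comm.mp hMMT
      have hcomp : ∀ i k : ZMod (2*d), ∑ a, γ a i * γ a k = if i = k then (1:ℝ) else 0 := by
        intro i k
        have hx := congrFun (congrFun hMTM (e i)) (e k)
        simp only [Matrix.mul_apply, Matrix.transpose_apply, Matrix.of_apply, Matrix.one_apply,
          hM, Equiv.symm_apply_apply, EmbeddingLike.apply_eq_iff_eq] at hx
        exact hx
      have hexp : ∀ i, g i = γ z0 i * (∑ k, γ z0 k * g k) := by
        intro i
        have h1 : ∑ a, γ a i * (∑ k, γ a k * g k) = g i := by
          calc ∑ a, γ a i * (∑ k, γ a k * g k) = ∑ a, ∑ k, γ a i * (γ a k * g k) :=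
                Finset.sum_congr rfl fun a _ => Finset.mul_sum _ _ _
            _ = ∑ k, ∑ a, γ a i * (γ a k * g k) := Finset.sum_comm
            _ = ∑ k, (∑ a, γ a i * γ a k) * g k := Finset.sum_congr rfl fun k _ => by
                rw [Finset.sum_mul]
                exact Finset.sum_congr rfl fun a _ => by ring
            _ = ∑ k, (if i = k then (1:ℝ) else 0) * g k :=
                Finset.sum_congr rfl fun k _ => by rw [hcomp]
            _ = g i := by simp [Finset.sum_ite_eq]
        rw [← h1]
        rw [Finset.sum_eq_single z0]
        · intro b _ hb; rw [hzero b hb, mul_zero]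
        · intro h; exact absurd (Finset.mem_univ z0) h
      have hgc : g 0 = g 1 := by rw [hexp 0, hexp 1, hγ0' 0, hγ0' 1]
      have hg0 : g 0 = 1/2 := by simp [hg, ZMod.val_zero]
      have hg1 : g 1 = Real.cos θ / 2 := by
        simp only [hg]
        rw [ZMod.val_one]
        rw [hθdef]
        norm_num
      have hcos1 : Real.cos θ < 1 := by
        have hsin : 0 < Real.sin (θ/2) :=
          Real.sin_pos_of_pos_of_lt_pi (by linarith) (by linarith)
        have hsq := Real.sin_sq_eq_half_sub (θ/2)
        rw [show 2*(θ/2) = θ by ring] at hsq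
        nlinarith
      rw [hg0, hg1] at hgc
      linarith
    obtain ⟨a0, ha0⟩ := hne
    have hμ0 : 0 ≤ μ := by
      rw [hμ]; have := Real.neg_one_le_cos θ; linarith
    have hlamf_eq : lamf = μ := by
      rw [hlamf, dif_pos ⟨a0, ha0⟩]
      apply le_antisymm
      · exact Finset.sup'_le _ _ fun a ha => by rw [heigval a ha, abs_of_nonneg hμ0]
      · have hx := Finset.le_sup' (fun a => |lam a|) ha0
        rwa [heigval a0 ha0, abs_of_nonneg hμ0] at hx
    refine ⟨hlamf_eq, by rw [hlamf_eq, hμ]; ring, ?_, ?_⟩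
    · intro hjhalf
      rw [hlamf_eq, hμ]
      have hθhalf : θ ≤ Real.pi/2 := by
        rw [hθdef, div_le_div_iff₀ hdR (by norm_num : (0:ℝ) < 2)]
        nlinarith
      have hsin : θ/Real.pi ≤ Real.sin (θ/2) := by
        have h := Real.mul_le_sin (x := θ/2) (by linarith) (by linarith)
        have h2 : 2/Real.pi * (θ/2) = θ/Real.pi := by ring
        linarith [h2 ▸ h]
      have hsq := Real.sin_sq_eq_half_sub (θ/2)
      rw [show 2*(θ/2) = θ by ring] at hsq
      have h3 : (θ/Real.pi)^2 ≤ Real.sin (θ/2)^2 :=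
        pow_le_pow_left₀ (by positivity) hsin 2
      have h4 : (θ/Real.pi)^2 = (j:ℝ)^2/(d:ℝ)^2 := by
        rw [hθdef]; field_simp
      have hπ4 := Real.pi_le_four
      rw [h4] at h3
      have h5 : (j:ℝ)^2/(d:ℝ)^2 ≤ (1 - Real.cos θ)/2 := by nlinarith
      have h6 : Real.pi^2 ≤ 16 := by nlinarith
      have hd2 : (0:ℝ) < (d:ℝ)^2 := by positivity
      rw [div_le_iff₀ (by positivity)] at h5 ⊢
      have hA : Real.pi^2*(j:ℝ)^2 ≤ 16*(j:ℝ)^2 :=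
        mul_le_mul_of_nonneg_right h6 (sq_nonneg _)
      have hB : (0:ℝ) ≤ (1 - Real.cos θ)/2*(d:ℝ)^2 := le_trans (sq_nonneg _) h5
      linarith [hA, h5, hB]
    · intro hjhalf
      rw [hlamf_eq, hμ]
      have hθge : Real.pi/2 ≤ θ := by
        rw [hθdef, div_le_div_iff₀ (by norm_num : (0:ℝ) < 2) hdR]
        have hd2j : (d:ℝ) ≤ 2*(j:ℝ) := by linarith
        calc Real.pi * (d:ℝ) ≤ Real.pi * (2*(j:ℝ)) :=
              mul_le_mul_of_nonneg_left hd2j (le_of_lt hπ0)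
          _ = Real.pi * (j:ℝ) * 2 := by ring
      have hcos := Real.cos_nonpos_of_pi_div_two_le_of_le hθge (by linarith)
      linarith
end
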